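/- arXiv:2012.04950 — 3 statements merged into one kernel-verified Lean document; each statement's English description precedes it below -/
import Mathlib

section
/- Consider N heterogeneous flywheel systems with positive parameters I_i, B_{vi}, γ_i for i = 1,...,N, and set α_0 = (2 Σ_{i=1}^N B_{vi}/γ_i)/(Σ_{i=1}^N I_i/γ_i) and β_0 = 2/(Σ_{i=1}^N I_i/γ_i). Let ψ_0 : ℝ → ℝ be differentiable with ψ_0'(t) = -α_0 ψ_0(t) - β_0 P_REF(t), and suppose φ_i(t) = ψ_0(t) for all i and t, with P_{i,out} determined by φ_i'(t) = -(2 B_{vi}/I_i) φ_i(t) - (2 γ_i/I_i) P_{i,out}(t). Then each individual power output satisfies the dispatch formula P_{i,out}(t) = (I_i/γ_i) · [ P_REF(t)/(Σ_{j=1}^N I_j/γ_j) + ((Σ_{j=1}^N B_{vj}/γ_j)/(Σ_{j=1}^N I_j/γ_j)) ψ_0(t) - (B_{vi}/I_i) ψ_0(t) ] for all t. -/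
/-- **Power dispatch formula.** When all flywheels' SOEs follow the common
trajectory `ψ₀`, each individual power output is determined by the dispatch
formula depending on the heterogeneous parameters. -/
theorem fesms_power_dispatch_formula
    (N : ℕ) (I B γ : Fin N → ℝ)
    (hI : ∀ i, 0 < I i) (hB : ∀ i, 0 < B i) (hγ : ∀ i, 0 < γ i)
    (α0 β0 : ℝ)
    (hα0 : α0 = (2 * ∑ i, B i / γ i) / (∑ i, I i / γ i))
    (hβ0 : β0 = 2 / (∑ i, I i / γ i))
    (PREF ψ0 : ℝ → ℝ)
    (hψ0 : ∀ t, HasDerivAt ψ0 (-α0 * ψ0 t - β0 * PREF t) t)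
    (φ Pout : Fin N → ℝ → ℝ)
    (hφ : ∀ i t, φ i t = ψ0 t)
    (hdyn : ∀ i t, deriv (φ i) t = -(2 * B i / I i) * φ i t - (2 * γ i / I i) * Pout i t) :
    ∀ (i : Fin N) (t : ℝ),
      Pout i t = (I i / γ i) *
        (PREF t / (∑ j, I j / γ j)
          + ((∑ j, B j / γ j) / (∑ j, I j / γ j)) * ψ0 t
          - (B i / I i) * ψ0 t) := by
  intro i t
  have hS : 0 < ∑ j, I j / γ j :=
    Finset.sum_pos (fun j _ => div_pos (hI j) (hγ j)) ⟨i, Finset.mem_univ i⟩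
  have hφfun : φ i = ψ0 := funext (hφ i)
  have hderiv : deriv (φ i) t = -α0 * ψ0 t - β0 * PREF t := by
    rw [hφfun, (hψ0 t).deriv]
  have key := hdyn i t
  rw [hderiv, hφ i t] at key
  -- key : -α0 * ψ0 t - β0 * PREF t = -(2*B i/I i)*ψ0 t - (2*γ i/I i)*Pout i t
  have hIi := (hI i).ne'
  have hγi := (hγ i).ne'
  have hSne := hS.ne'
  subst hα0 hβ0
  field_simp at key ⊢
  nlinarith [key]
end

section
/- Consider N ≥ 1 heterogeneous flywheel systems with positive parameters I_i, B_{vi}, γ_i for i = 1,...,N. Let ψ_0 : ℝ → ℝ be differentiable, let P_{i,out} : ℝ → ℝ, and suppose for every i and every t the common-trajectory dynamics hold: ψ_0'(t) = -(2 B_{vi}/I_i) ψ_0(t) - (2 γ_i/I_i) P_{i,out}(t), and in addition the total power tracks the reference: Σ_{i=1}^N P_{i,out}(t) = P_REF(t). Then ψ_0 necessarily satisfies ψ_0'(t) = -α_0 ψ_0(t) - β_0 P_REF(t) for all t, where α_0 = (2 Σ_{i=1}^N B_{vi}/γ_i)/(Σ_{i=1}^N I_i/γ_i) and β_0 = 2/(Σ_{i=1}^N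 I_i/γ_i). -/
/-! Multiplying the `i`-th dynamics by `I i / γ i` leaves `-2 P_{i,out}` as the only
flywheel-specific input term; summing over the flywheels and using the tracking condition
turns the sum of these into `-2 P_REF`, and dividing by `∑ I i / γ i > 0` gives the claim. -/

open Finset

theorem mul_div_eq_of_eq_neg_div_mul_sub {I B γ x y p : ℝ} (hI : I ≠ 0) (hγ : γ ≠ 0)
    (h : x = -(2 * B / I) * y - (2 * γ / I) * p) :
    I / γ * x = -(2 * (B / γ)) * y - 2 * p := by
  rw [h]
  field_simp

theorem sum_div_mul_eq_of_forall_eq_neg_div_mul_sub {ι : Type*} [Fintype ι]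
    {I B γ P : ι → ℝ} {x y : ℝ} (hI : ∀ i, I i ≠ 0) (hγ : ∀ i, γ i ≠ 0)
    (h : ∀ i, x = -(2 * B i / I i) * y - (2 * γ i / I i) * P i) :
    (∑ i, I i / γ i) * x = -(2 * ∑ i, B i / γ i) * y - 2 * ∑ i, P i := by
  simp only [sum_mul, mul_sum, neg_mul, ← sum_neg_distrib, ← sum_sub_distrib]
  refine sum_congr rfl fun i _ => ?_
  rw [mul_div_eq_of_eq_neg_div_mul_sub (hI i) (hγ i) (h i)]
  ring

theorem fesms_common_soe_trajectory_necessity_general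
    (N : ℕ) (hN : 1 ≤ N) (I B γ : Fin N → ℝ)
    (hI : ∀ i, 0 < I i) (hγ : ∀ i, 0 < γ i)
    (α0 β0 : ℝ)
    (hα0 : α0 = (2 * ∑ i, B i / γ i) / (∑ i, I i / γ i))
    (hβ0 : β0 = 2 / (∑ i, I i / γ i))
    (PREF ψ0 : ℝ → ℝ)
    (Pout : Fin N → ℝ → ℝ)
    (hdyn : ∀ (i : Fin N) (t : ℝ),
      deriv ψ0 t = -(2 * B i / I i) * ψ0 t - (2 * γ i / I i) * Pout i t)
    (htrack : ∀ t : ℝ, (∑ i, Pout i t) = PREF t) :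
    ∀ t : ℝ, deriv ψ0 t = -α0 * ψ0 t - β0 * PREF t := by
  intro t
  have hnonempty : (univ : Finset (Fin N)).Nonempty := univ_nonempty_iff.mpr ⟨⟨0, hN⟩⟩
  have hS : 0 < ∑ i, I i / γ i :=
    sum_pos (fun i _ => div_pos (hI i) (hγ i)) hnonempty
  have hsum := sum_div_mul_eq_of_forall_eq_neg_div_mul_sub
    (fun i => (hI i).ne') (fun i => (hγ i).ne') (fun i => hdyn i t)
  rw [htrack t] at hsum
  rw [hα0, hβ0]
  field_simp
  linear_combination hsum

/-- **Necessity of the common SOE trajectory dynamics.** If a common SOE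
trajectory `ψ₀` is followed by every flywheel and the total power output tracks
the reference, then `ψ₀` necessarily obeys `ψ₀' = -α₀ ψ₀ - β₀ P_REF`. -/
theorem fesms_common_soe_trajectory_necessity
    (N : ℕ) (hN : 1 ≤ N) (I B γ : Fin N → ℝ)
    (hI : ∀ i, 0 < I i) (hB : ∀ i, 0 < B i) (hγ : ∀ i, 0 < γ i)
    (α0 β0 : ℝ)
    (hα0 : α0 = (2 * ∑ i, B i / γ i) / (∑ i, I i / γ i))
    (hβ0 : β0 = 2 / (∑ i, I i / γ i))
    (PREF ψ0 : ℝ → ℝ) (hψ0 : Differentiable ℝ ψ0)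
    (Pout : Fin N → ℝ → ℝ)
    (hdyn : ∀ (i : Fin N) (t : ℝ),
      deriv ψ0 t = -(2 * B i / I i) * ψ0 t - (2 * γ i / I i) * Pout i t)
    (htrack : ∀ t : ℝ, (∑ i, Pout i t) = PREF t) :
    ∀ t : ℝ, deriv ψ0 t = -α0 * ψ0 t - β0 * PREF t :=
  fesms_common_soe_trajectory_necessity_general N hN I B γ hI hγ α0 β0 hα0 hβ0 PREF ψ0 Pout hdyn
    htrack
end

section
/- Let κ > 0 and α_0 > 0. Let ψ̄, ᾱ, β̄, P̄ : [0, ∞) → ℝ decay to zero exponentially, let β : [0, ∞) → ℝ be bounded, and let ψ, P_REF : [0, ∞) → ℝ be bounded by polynomial functions. Let φ̄ : [0, ∞) → ℝ be differentiable and satisfy the error dynamics φ̄'(t) = -κ φ̄(t) + κ ψ̄(t) - α_0 ψ̄(t) - ᾱ(t) ψ(t) - β̄(t) P_REF(t) - β(t) P̄(t) for all t ≥ 0. Then φ̄(t) → 0 as t → ∞. -/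
/-!
Multiplying the error equation `φ̄' = -κ φ̄ + u` by `exp (κ t)` gives `(exp (κ t) φ̄)' = exp (κ t) u`.
The forcing term `u` decays exponentially, because exponential decay absorbs polynomial growth
(`tᵏ ≤ k! η⁻ᵏ exp (η t)` for every `η > 0`). Hence `exp (κ t) φ̄` grows at most like
`exp ((κ - δ) t)` for some `0 < δ < κ`, so `φ̄` itself decays exponentially.
-/

open Real Filter Topology Finset

def DecaysExponentially (f : ℝ → ℝ) : Prop :=
  ∃ ρ ϱ : ℝ, 0 < ρ ∧ 0 < ϱ ∧ ∀ t : ℝ, 0 ≤ t → |f t| ≤ ρ * exp (-ϱ * t)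

def PolynomiallyBounded (f : ℝ → ℝ) : Prop :=
  ∃ (q : ℕ) (c : ℕ → ℝ), ∀ t : ℝ, 0 ≤ t → |f t| ≤ ∑ k ∈ range (q + 1), c k * t ^ k

lemma pow_le_factorial_div_pow_mul_exp (k : ℕ) {η t : ℝ} (hη : 0 < η) (ht : 0 ≤ t) :
    t ^ k ≤ k.factorial / η ^ k * exp (η * t) := by
  have h := pow_div_factorial_le_exp _ (mul_nonneg hη.le ht) k
  rw [div_le_iff₀ (by positivity), mul_pow] at h
  rw [div_mul_eq_mul_div, le_div_iff₀ (by positivity)]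
  linarith

namespace PolynomiallyBounded

lemma of_bounded {f : ℝ → ℝ} (h : ∃ M : ℝ, ∀ t : ℝ, 0 ≤ t → |f t| ≤ M) :
    PolynomiallyBounded f := by
  obtain ⟨M, hM⟩ := h
  exact ⟨0, fun _ => M, by simpa using hM⟩

lemma le_mul_exp {f : ℝ → ℝ} (hf : PolynomiallyBounded f) {η : ℝ} (hη : 0 < η) :
    ∃ K : ℝ, ∀ t : ℝ, 0 ≤ t → |f t| ≤ K * exp (η * t) := by
  obtain ⟨q, c, hc⟩ := hf
  refine ⟨∑ k ∈ range (q + 1), |c k| * (k.factorial / η ^ k), fun t ht => ?_⟩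
  rw [sum_mul]
  refine (hc t ht).trans (sum_le_sum fun k _ => ?_)
  calc c k * t ^ k ≤ |c k| * t ^ k := by gcongr; exact le_abs_self _
    _ ≤ |c k| * (k.factorial / η ^ k * exp (η * t)) := by
        gcongr; exact pow_le_factorial_div_pow_mul_exp k hη ht
    _ = _ := by ring

end PolynomiallyBounded

namespace DecaysExponentially

variable {f g : ℝ → ℝ}

lemma of_abs_le {ρ ϱ : ℝ} (hϱ : 0 < ϱ) (h : ∀ t : ℝ, 0 ≤ t → |f t| ≤ ρ * exp (-ϱ * t)) :
    DecaysExponentially f :=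
  ⟨max ρ 1, ϱ, by positivity, hϱ, fun t ht =>
    (h t ht).trans (by gcongr; exact le_max_left _ _)⟩

lemma const_mul (hf : DecaysExponentially f) (a : ℝ) :
    DecaysExponentially (fun t => a * f t) := by
  obtain ⟨ρ, ϱ, -, hϱ, h⟩ := hf
  refine of_abs_le (ρ := |a| * ρ) hϱ fun t ht => ?_
  rw [abs_mul, mul_assoc]
  exact mul_le_mul_of_nonneg_left (h t ht) (abs_nonneg a)

lemma sub (hf : DecaysExponentially f) (hg : DecaysExponentially g) :
    DecaysExponentially (fun t => f t - g t) := by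
  obtain ⟨ρ, ϱ, hρ, hϱ, hf⟩ := hf
  obtain ⟨σ, ς, hσ, hς, hg⟩ := hg
  refine of_abs_le (ρ := ρ + σ) (lt_min hϱ hς) fun t ht => ?_
  have hf' : |f t| ≤ ρ * exp (-min ϱ ς * t) :=
    (hf t ht).trans (by gcongr; exact min_le_left ϱ ς)
  have hg' : |g t| ≤ σ * exp (-min ϱ ς * t) :=
    (hg t ht).trans (by gcongr; exact min_le_right ϱ ς)
  linarith [abs_sub (f t) (g t)]

lemma mul_polynomiallyBounded (hf : DecaysExponentially f) (hg : PolynomiallyBounded g) :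
    DecaysExponentially (fun t => f t * g t) := by
  obtain ⟨ρ, ϱ, hρ, hϱ, hf⟩ := hf
  obtain ⟨K, hK⟩ := hg.le_mul_exp (half_pos hϱ)
  refine of_abs_le (ρ := ρ * K) (half_pos hϱ) fun t ht => ?_
  calc |f t * g t| = |f t| * |g t| := abs_mul _ _
    _ ≤ ρ * exp (-ϱ * t) * (K * exp (ϱ / 2 * t)) :=
        mul_le_mul (hf t ht) (hK t ht) (abs_nonneg _) (by positivity)
    _ = ρ * K * exp (-(ϱ / 2) * t) := by
        rw [mul_mul_mul_comm, ← exp_add]; ring_nf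

lemma tendsto_zero (hf : DecaysExponentially f) : Tendsto f atTop (𝓝 0) := by
  obtain ⟨ρ, ϱ, -, hϱ, h⟩ := hf
  have hexp : Tendsto (fun t => ρ * exp (-ϱ * t)) atTop (𝓝 0) := by
    simpa using (tendsto_exp_atBot.comp
      (tendsto_id.const_mul_atTop_of_neg (neg_lt_zero.mpr hϱ))).const_mul ρ
  refine squeeze_zero_norm' ?_ hexp
  filter_upwards [eventually_ge_atTop 0] with t ht using h t ht

end DecaysExponentially

lemma PolynomiallyBounded.mul_decaysExponentially {f g : ℝ → ℝ} (hf : PolynomiallyBounded f)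
    (hg : DecaysExponentially g) : DecaysExponentially (fun t => f t * g t) := by
  simpa only [mul_comm] using hg.mul_polynomiallyBounded hf

lemma abs_le_of_hasDerivAt_neg_mul_add {κ δ C : ℝ} {φ u : ℝ → ℝ} (hδκ : δ < κ)
    (hu : ∀ t : ℝ, 0 ≤ t → |u t| ≤ C * exp (-δ * t))
    (hφ : ∀ t : ℝ, 0 ≤ t → HasDerivAt φ (-κ * φ t + u t) t) {t : ℝ} (ht : 0 ≤ t) :
    |φ t| ≤ |φ 0| * exp (-κ * t) + C / (κ - δ) * exp (-δ * t) := by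
  have hC : 0 ≤ C := by simpa using (abs_nonneg _).trans (hu 0 le_rfl)
  set g : ℝ → ℝ := fun s => exp (κ * s) * φ s
  have hg : ∀ s, 0 ≤ s → HasDerivAt g (exp (κ * s) * u s) s := fun s hs =>
    (((hasDerivAt_id' s).const_mul κ).exp.mul (hφ s hs)).congr_deriv (by ring)
  have hB : ∀ s, HasDerivAt (fun s => |φ 0| + C / (κ - δ) * exp ((κ - δ) * s))
      (C * exp ((κ - δ) * s)) s := fun s =>
    ((((hasDerivAt_id' s).const_mul (κ - δ)).exp.const_mul (C / (κ - δ))).const_add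
      |φ 0|).congr_deriv (by field_simp [(sub_pos.mpr hδκ).ne'])
  have hg_bound : |g t| ≤ |φ 0| + C / (κ - δ) * exp ((κ - δ) * t) := by
    refine image_norm_le_of_norm_deriv_right_le_deriv_boundary
      (fun s hs => (hg s hs.1).continuousAt.continuousWithinAt)
      (fun s hs => (hg s hs.1).hasDerivWithinAt) ?_ hB (fun s hs => ?_) ⟨ht, le_rfl⟩
    · simp [g, div_nonneg hC (sub_pos.mpr hδκ).le]
    · calc ‖exp (κ * s) * u s‖ = exp (κ * s) * |u s| := by
            rw [Real.norm_eq_abs, abs_mul, abs_of_pos (exp_pos _)]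
        _ ≤ exp (κ * s) * (C * exp (-δ * s)) := by gcongr; exact hu s hs.1
        _ = C * exp ((κ - δ) * s) := by rw [mul_left_comm, ← exp_add]; ring_nf
  have hφg : φ t = exp (-κ * t) * g t := by
    simp only [g, ← mul_assoc, ← exp_add]
    simp
  calc |φ t| = exp (-κ * t) * |g t| := by rw [hφg, abs_mul, abs_of_pos (exp_pos _)]
    _ ≤ exp (-κ * t) * (|φ 0| + C / (κ - δ) * exp ((κ - δ) * t)) := by gcongr
    _ = |φ 0| * exp (-κ * t) + C / (κ - δ) * exp (-δ * t) := by
        rw [mul_add, mul_left_comm, ← exp_add]; ring_nf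

lemma DecaysExponentially.of_hasDerivAt_neg_mul_add {κ : ℝ} {φ u : ℝ → ℝ} (hκ : 0 < κ)
    (hu : DecaysExponentially u) (hφ : ∀ t : ℝ, 0 ≤ t → HasDerivAt φ (-κ * φ t + u t) t) :
    DecaysExponentially φ := by
  obtain ⟨ρ, ϱ, hρ, hϱ, hu⟩ := hu
  obtain ⟨δ, hδ, hδϱ, hδκ⟩ : ∃ δ, 0 < δ ∧ δ ≤ ϱ ∧ δ < κ :=
    ⟨min ϱ κ / 2, by positivity, by linarith [min_le_left ϱ κ, lt_min hϱ hκ],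
      by linarith [min_le_right ϱ κ, lt_min hϱ hκ]⟩
  have hu' : ∀ t, 0 ≤ t → |u t| ≤ ρ * exp (-δ * t) := fun t ht =>
    (hu t ht).trans (by gcongr)
  refine of_abs_le (ρ := |φ 0| + ρ / (κ - δ)) hδ fun t ht => ?_
  calc |φ t| ≤ |φ 0| * exp (-κ * t) + ρ / (κ - δ) * exp (-δ * t) :=
        abs_le_of_hasDerivAt_neg_mul_add hδκ hu' hφ ht
    _ ≤ |φ 0| * exp (-δ * t) + ρ / (κ - δ) * exp (-δ * t) := by gcongr
    _ = _ := by ring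

theorem tracking_error_converges_to_zero_general
    (κ α0 : ℝ) (hκ : 0 < κ)
    (ψbar αbar βbar Pbar β ψ PREF φbar : ℝ → ℝ)
    (hψbar : ∃ ρ ϱ : ℝ, 0 < ρ ∧ 0 < ϱ ∧ ∀ t : ℝ, 0 ≤ t → |ψbar t| ≤ ρ * Real.exp (-ϱ * t))
    (hαbar : ∃ ρ ϱ : ℝ, 0 < ρ ∧ 0 < ϱ ∧ ∀ t : ℝ, 0 ≤ t → |αbar t| ≤ ρ * Real.exp (-ϱ * t))
    (hβbar : ∃ ρ ϱ : ℝ, 0 < ρ ∧ 0 < ϱ ∧ ∀ t : ℝ, 0 ≤ t → |βbar t| ≤ ρ * Real.exp (-ϱ * t))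
    (hPbar : ∃ ρ ϱ : ℝ, 0 < ρ ∧ 0 < ϱ ∧ ∀ t : ℝ, 0 ≤ t → |Pbar t| ≤ ρ * Real.exp (-ϱ * t))
    (hβbdd : ∃ M : ℝ, ∀ t : ℝ, 0 ≤ t → |β t| ≤ M)
    (hψpoly : ∃ (q : ℕ) (c : ℕ → ℝ),
      ∀ t : ℝ, 0 ≤ t → |ψ t| ≤ ∑ k ∈ Finset.range (q + 1), c k * t ^ k)
    (hPpoly : ∃ (q : ℕ) (c : ℕ → ℝ),
      ∀ t : ℝ, 0 ≤ t → |PREF t| ≤ ∑ k ∈ Finset.range (q + 1), c k * t ^ k)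
    (hφbar : ∀ t : ℝ, 0 ≤ t → HasDerivAt φbar
      (-κ * φbar t + κ * ψbar t - α0 * ψbar t - αbar t * ψ t
        - βbar t * PREF t - β t * Pbar t) t) :
    Filter.Tendsto φbar Filter.atTop (nhds 0) := by
  have hψbar : DecaysExponentially ψbar := hψbar
  have hαbar : DecaysExponentially αbar := hαbar
  have hβbar : DecaysExponentially βbar := hβbar
  have hPbar : DecaysExponentially Pbar := hPbar
  have hforcing : DecaysExponentially fun t =>
      κ * ψbar t - α0 * ψbar t - αbar t * ψ t - βbar t * PREF t - β t * Pbar t :=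
    ((((hψbar.const_mul κ).sub (hψbar.const_mul α0)).sub
      (hαbar.mul_polynomiallyBounded hψpoly)).sub (hβbar.mul_polynomiallyBounded hPpoly)).sub
      ((PolynomiallyBounded.of_bounded hβbdd).mul_decaysExponentially hPbar)
  refine (DecaysExponentially.of_hasDerivAt_neg_mul_add hκ hforcing fun t ht => ?_).tendsto_zero
  exact (hφbar t ht).congr_deriv (by ring)

/-- **Final convergence step of the stability analysis.** The tracking error
`φ̄ = φᵢ − ψ₀` obeys `φ̄' = -κ φ̄ + κ ψ̄ - α₀ ψ̄ - ᾱ ψ - β̄ P_REF - β P̄` where the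
observer errors `ψ̄, ᾱ, β̄, P̄` decay exponentially, `β` is bounded and `ψ, P_REF`
are polynomially bounded; hence `φ̄(t) → 0` as `t → ∞`. -/
theorem tracking_error_converges_to_zero
    (κ α0 : ℝ) (hκ : 0 < κ) (hα0 : 0 < α0)
    (ψbar αbar βbar Pbar β ψ PREF φbar : ℝ → ℝ)
    (hψbar : ∃ ρ ϱ : ℝ, 0 < ρ ∧ 0 < ϱ ∧ ∀ t : ℝ, 0 ≤ t → |ψbar t| ≤ ρ * Real.exp (-ϱ * t))
    (hαbar : ∃ ρ ϱ : ℝ, 0 < ρ ∧ 0 < ϱ ∧ ∀ t : ℝ, 0 ≤ t → |αbar t| ≤ ρ * Real.exp (-ϱ * t))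
    (hβbar : ∃ ρ ϱ : ℝ, 0 < ρ ∧ 0 < ϱ ∧ ∀ t : ℝ, 0 ≤ t → |βbar t| ≤ ρ * Real.exp (-ϱ * t))
    (hPbar : ∃ ρ ϱ : ℝ, 0 < ρ ∧ 0 < ϱ ∧ ∀ t : ℝ, 0 ≤ t → |Pbar t| ≤ ρ * Real.exp (-ϱ * t))
    (hβbdd : ∃ M : ℝ, ∀ t : ℝ, 0 ≤ t → |β t| ≤ M)
    (hψpoly : ∃ (q : ℕ) (c : ℕ → ℝ),
      ∀ t : ℝ, 0 ≤ t → |ψ t| ≤ ∑ k ∈ Finset.range (q + 1), c k * t ^ k)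
    (hPpoly : ∃ (q : ℕ) (c : ℕ → ℝ),
      ∀ t : ℝ, 0 ≤ t → |PREF t| ≤ ∑ k ∈ Finset.range (q + 1), c k * t ^ k)
    (hφbar : ∀ t : ℝ, 0 ≤ t → HasDerivAt φbar
      (-κ * φbar t + κ * ψbar t - α0 * ψbar t - αbar t * ψ t
        - βbar t * PREF t - β t * Pbar t) t) :
    Filter.Tendsto φbar Filter.atTop (nhds 0) :=
  tracking_error_converges_to_zero_general κ α0 hκ ψbar αbar βbar Pbar β ψ PREF φbar hψbar hαbar
    hβbar hPbar hβbdd hψpoly hPpoly hφbar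
end
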